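/- Let U ∈ U(2). Then the optimal success probability of unambiguous discrimination of the qubit measurements 𝒫_𝟙 and 𝒫_U without the use of entanglement is p_u(𝒫_𝟙, 𝒫_U) = 1 if |U₁₂|² = 1, and p_u(𝒫_𝟙, 𝒫_U) = |U₁₂|²/2 if |U₁₂|² < 1, where U₁₂ = ⟨1|U|2⟩. In both cases the optimum is attained with input state |1⟩⟨1|. -/

import Mathlib

open Matrix MeasureTheory
open scoped ENNReal ComplexOrder

noncomputable section

namespace Paper

/-- Trace norm `‖X‖₁ = Tr √(Xᴴ X)`. -/
noncomputable def traceNorm {n : Type*} [Fintype n] [DecidableEq n] (X : Matrix n n ℂ) : ℝ :=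
  (((Matrix.posSemidef_conjTranspose_mul_self X).1.eigenvectorUnitary : Matrix n n ℂ) *
      Matrix.diagonal (fun i => ((Real.sqrt ((Matrix.posSemidef_conjTranspose_mul_self X).1.eigenvalues i) : ℝ) : ℂ)) *
      (star ((Matrix.posSemidef_conjTranspose_mul_self X).1.eigenvectorUnitary : Matrix n n ℂ))).trace.re

/-- `(S ⊗ id)(X)`, the map `S` applied to the first tensor factor. -/
def tensorApplyLeft {n n' m : Type*} [Fintype n] [Fintype m]
    (S : Matrix n n ℂ →ₗ[ℂ] Matrix n' n' ℂ)
    (X : Matrix (n × m) (n × m) ℂ) : Matrix (n' × m) (n' × m) ℂ :=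
  Matrix.of fun p q => S (Matrix.of fun i j => X (i, p.2) (j, q.2)) p.1 q.1

/-- Diamond norm of a linear map between matrix spaces. -/
noncomputable def diamondNorm {n n' : Type*} [Fintype n] [DecidableEq n] [Fintype n']
    [DecidableEq n'] (S : Matrix n n ℂ →ₗ[ℂ] Matrix n' n' ℂ) : ℝ :=
  sSup { t : ℝ | ∃ (k : ℕ) (X : Matrix (n × Fin (k + 1)) (n × Fin (k + 1)) ℂ),
    traceNorm X = 1 ∧ t = traceNorm (tensorApplyLeft S X) }

/-- The completely dephasing channel in the standard basis. -/
def dephaseMap (n : Type*) [Fintype n] [DecidableEq n] :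
    Matrix n n ℂ →ₗ[ℂ] Matrix n n ℂ where
  toFun X := Matrix.diagonal fun i => X i i
  map_add' X Y := by
    ext i j
    by_cases h : i = j <;> simp [Matrix.diagonal_apply, h]
  map_smul' c X := by
    ext i j
    by_cases h : i = j <;> simp [Matrix.diagonal_apply, h]

/-- The unitary channel `Φ_U(X) = U X Uᴴ`. -/
def unitaryChannel {n : Type*} [Fintype n] (U : Matrix n n ℂ) :
    Matrix n n ℂ →ₗ[ℂ] Matrix n n ℂ where
  toFun X := U * X * Uᴴ
  map_add' X Y := by simp [Matrix.mul_add, Matrix.add_mul]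
  map_smul' c X := by simp [mul_smul_comm, smul_mul_assoc]

/-- The von Neumann measurement channel `𝒫_U(σ) = Σ_i ⟨i|U† σ U|i⟩ |i⟩⟨i| = diag(U† σ U)`. -/
def measChannel {n : Type*} [Fintype n] [DecidableEq n] (U : Matrix n n ℂ) :
    Matrix n n ℂ →ₗ[ℂ] Matrix n n ℂ :=
  (dephaseMap n).comp (unitaryChannel Uᴴ)

/-- `N`-fold tensor (Kronecker) power of a matrix. -/
def tensorPow {d : ℕ} (U : Matrix (Fin d) (Fin d) ℂ) (N : ℕ) :
    Matrix (Fin N → Fin d) (Fin N → Fin d) ℂ :=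
  Matrix.of fun f g => ∏ k, U (f k) (g k)

/-- Tensor product of a family of `d × d` matrices. -/
def tensorFamily {d N : ℕ} (ρ : Fin N → Matrix (Fin d) (Fin d) ℂ) :
    Matrix (Fin N → Fin d) (Fin N → Fin d) ℂ :=
  Matrix.of fun f g => ∏ k, (ρ k) (f k) (g k)

/-- Density matrices. -/
def IsDensityMatrix {n : Type*} [Fintype n] (ρ : Matrix n n ℂ) : Prop :=
  ρ.PosSemidef ∧ ρ.trace = 1

/-- The set of diagonal unitary matrices `𝒟𝒰`. -/
def diagUnitary (n : Type*) [Fintype n] [DecidableEq n] : Set (Matrix n n ℂ) :=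
  { E | E ∈ Matrix.unitaryGroup n ℂ ∧ E.IsDiag }

/-- `Θ(U)`: the angle of the shortest arc of the unit circle containing all eigenvalues. -/
noncomputable def thetaArc {n : Type*} [Fintype n] [DecidableEq n] (U : Matrix n n ℂ) : ℝ :=
  sInf { t : ℝ | 0 ≤ t ∧ ∃ α : ℝ, ∀ lam ∈ spectrum ℂ U, ∃ s : ℝ, 0 ≤ s ∧ s ≤ t ∧
    lam = Complex.exp (Complex.I * (↑α + ↑s)) }

/-- `Υ(U) = min_{E ∈ 𝒟𝒰} Θ(UE)`. -/
noncomputable def upsilonArc {n : Type*} [Fintype n] [DecidableEq n] (U : Matrix n n ℂ) : ℝ :=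
  sInf { t : ℝ | ∃ E ∈ diagUnitary n, t = thetaArc (U * E) }

/-- Numerical range `W(A)`. -/
def numericalRange {n : Type*} [Fintype n] (A : Matrix n n ℂ) : Set ℂ :=
  { z | ∃ x : n → ℂ, (∑ i, ‖x i‖ ^ 2) = 1 ∧ z = star x ⬝ᵥ A.mulVec x }

/-- minimal modulus over the numerical range -/
noncomputable def nuMin {n : Type*} [Fintype n] (A : Matrix n n ℂ) : ℝ :=
  sInf { r : ℝ | ∃ z ∈ numericalRange A, r = ‖z‖ }

/-- Operator (spectral) norm of a matrix. -/
noncomputable def opNorm {n : Type*} [Fintype n] [DecidableEq n] (A : Matrix n n ℂ) : ℝ :=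
  ‖Matrix.toEuclideanCLM (𝕜 := ℂ) A‖

/-- Matrix of the orthogonal projection onto a subspace of `EuclideanSpace ℂ n`. -/
noncomputable def projMatrix {n : Type*} [Fintype n] [DecidableEq n]
    (K : Submodule ℂ (EuclideanSpace ℂ n)) : Matrix n n ℂ :=
  Matrix.toEuclideanLin.symm (K.subtype ∘ₗ (K.orthogonalProjectionOnto).toLinearMap)

/-- Matrix of the orthogonal projection onto the eigenspace of `A` for eigenvalue `lam`. -/
noncomputable def eigProj {n : Type*} [Fintype n] [DecidableEq n] (A : Matrix n n ℂ) (lam : ℂ) :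
    Matrix n n ℂ :=
  projMatrix (Module.End.eigenspace (Matrix.toEuclideanLin A) lam)

end Paper

namespace Paper

/-- Optimal unambiguous discrimination probability of `𝒫_𝟙` vs `𝒫_U` without entanglement. -/
noncomputable def puNoEnt {n : Type*} [Fintype n] [DecidableEq n] (U : Matrix n n ℂ) : ℝ :=
  sSup { t : ℝ | ∃ σ M₁ M₂ M₃ : Matrix n n ℂ,
    IsDensityMatrix σ ∧ M₁.PosSemidef ∧ M₂.PosSemidef ∧ M₃.PosSemidef ∧ M₁ + M₂ + M₃ = 1 ∧
    (M₂ * measChannel (1 : Matrix n n ℂ) σ).trace = 0 ∧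
    (M₁ * measChannel U σ).trace = 0 ∧
    t = (1 / 2) * (((M₁ * measChannel (1 : Matrix n n ℂ) σ).trace).re +
                   ((M₂ * measChannel U σ).trace).re) }

/-- Optimal entanglement-assisted unambiguous discrimination probability of `𝒫_𝟙` vs `𝒫_U`. -/
noncomputable def puEnt {n : Type*} [Fintype n] [DecidableEq n] (U : Matrix n n ℂ) : ℝ :=
  sSup { t : ℝ | ∃ (k : ℕ) (σ M₁ M₂ M₃ : Matrix (n × Fin (k + 1)) (n × Fin (k + 1)) ℂ),
    IsDensityMatrix σ ∧ M₁.PosSemidef ∧ M₂.PosSemidef ∧ M₃.PosSemidef ∧ M₁ + M₂ + M₃ = 1 ∧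
    (M₂ * tensorApplyLeft (measChannel (1 : Matrix n n ℂ)) σ).trace = 0 ∧
    (M₁ * tensorApplyLeft (measChannel U) σ).trace = 0 ∧
    t = (1 / 2) * (((M₁ * tensorApplyLeft (measChannel (1 : Matrix n n ℂ)) σ).trace).re +
                   ((M₂ * tensorApplyLeft (measChannel U) σ).trace).re) }

/-- `Π_A = Σ_{i ∈ A} |i⟩⟨i|`. -/
noncomputable def basisProj {n : Type*} [Fintype n] [DecidableEq n] (A : Finset n) :
    Matrix n n ℂ :=
  ∑ i ∈ A, Matrix.single i i (1 : ℂ)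

/-- `ℙ_{Γ,Δ}`: projector onto `span{U|i⟩ : i ∈ Γᶜ} ∩ span{|j⟩ : j ∈ Δᶜ}`. -/
noncomputable def PGD {n : Type*} [Fintype n] [DecidableEq n] (U : Matrix n n ℂ)
    (Γ Δ : Finset n) : Matrix n n ℂ :=
  projMatrix
    ((Submodule.span ℂ { v : EuclideanSpace ℂ n |
        ∃ i ∉ Γ, v = (WithLp.equiv 2 (n → ℂ)).symm (fun r => U r i) }) ⊓
     (Submodule.span ℂ { v : EuclideanSpace ℂ n |
        ∃ j ∉ Δ, v = (WithLp.equiv 2 (n → ℂ)).symm (Pi.single j 1) }))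

/-- `W` acting on the `k`-th of `N` registers (identity elsewhere). -/
def actOn {d : ℕ} (N : ℕ) (W : Matrix (Fin d) (Fin d) ℂ) (k : ℕ) :
    Matrix (Fin N → Fin d) (Fin N → Fin d) ℂ :=
  Matrix.of fun f g => ∏ j : Fin N,
    if (j : ℕ) = k then W (f j) (g j) else (if f j = g j then (1 : ℂ) else 0)

/-- A system operator extended by identity on the ancilla. -/
def sysOp {d N m : ℕ} (A : Matrix (Fin N → Fin d) (Fin N → Fin d) ℂ) :
    Matrix ((Fin N → Fin d) × Fin m) ((Fin N → Fin d) × Fin m) ℂ :=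
  Matrix.of fun p q => A p.1 q.1 * (if p.2 = q.2 then (1 : ℂ) else 0)

/-- `C` is classically controlled on the first `k` registers, i.e. of the form
`Σ_{i₁,…,i_k} |i₁…i_k⟩⟨i₁…i_k| ⊗ V_{i₁…i_k}`. -/
def ControlledOnFirst {d N m : ℕ} (k : ℕ)
    (C : Matrix ((Fin N → Fin d) × Fin m) ((Fin N → Fin d) × Fin m) ℂ) : Prop :=
  ∀ p q, (∃ j : Fin N, (j : ℕ) < k ∧ p.1 j ≠ q.1 j) → C p q = 0

/-- The sequential-scheme unitary
`A_W = (𝟙⊗…⊗W⊗𝟙ₘ)·C_{N-1}·…·C₁·(W⊗𝟙⊗…⊗𝟙ₘ)`. -/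
noncomputable def seqUnitary {d N m : ℕ} (W : Matrix (Fin d) (Fin d) ℂ)
    (C : ℕ → Matrix ((Fin N → Fin d) × Fin m) ((Fin N → Fin d) × Fin m) ℂ) :
    Matrix ((Fin N → Fin d) × Fin m) ((Fin N → Fin d) × Fin m) ℂ :=
  (((List.range (N - 1)).reverse.map fun j =>
      sysOp (actOn N W (j + 1)) * C (j + 1)).prod) * sysOp (actOn N W 0)

/-- Dephasing in the standard product basis on the first `N` registers only. -/
def dephaseFirst (d N m : ℕ) :
    Matrix ((Fin N → Fin d) × Fin m) ((Fin N → Fin d) × Fin m) ℂ →ₗ[ℂ]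
    Matrix ((Fin N → Fin d) × Fin m) ((Fin N → Fin d) × Fin m) ℂ where
  toFun X := Matrix.of fun p q => if p.1 = q.1 then X p q else 0
  map_add' X Y := by
    ext p q
    by_cases h : p.1 = q.1 <;> simp [h]
  map_smul' c X := by
    ext p q
    by_cases h : p.1 = q.1 <;> simp [h]

/-- The Hadamard matrix. -/
noncomputable def Hmat : Matrix (Fin 2) (Fin 2) ℂ :=
  (((1 : ℝ) / Real.sqrt 2 : ℝ) : ℂ) • !![1, 1; 1, -1]

/-- `ψ = (|1⟩⊗|1⟩ − |2⟩⊗|2⟩)/√2`. -/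
noncomputable def psiVec : Fin 2 × Fin 2 → ℂ := fun p =>
  if p = (0, 0) then (((1 : ℝ) / Real.sqrt 2 : ℝ) : ℂ)
  else if p = (1, 1) then -(((1 : ℝ) / Real.sqrt 2 : ℝ) : ℂ) else 0

/-- `ρ = |ψ⟩⟨ψ|`. -/
noncomputable def rhoPsi : Matrix (Fin 2 × Fin 2) (Fin 2 × Fin 2) ℂ :=
  Matrix.of fun p q => psiVec p * (starRingEnd ℂ) (psiVec q)

end Paper

/-! Write `p = diag σ` and `q = diag (U†σU)` for the outcome distributions of `𝒫_𝟙(σ)` and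
`𝒫_U(σ)`. Unambiguity makes `M_U` vanish on the support of `p` and `M_𝟙` on the support of `q`
(on the diagonal), so a basis index `i` adds to the success probability only if `p i = 0` or
`q i = 0`, and then at most `q i`, resp. `p i`. For a qubit, `p i = 0` forces `σ` to be the
other basis state, so that `q i = |U₁₂|²`, and symmetrically `q i = 0` gives `p i = |U₁₂|²`.
Both indices can contribute only when `|U₁₂| = 1`, which gives the upper bounds `1` and
`|U₁₂|²/2`; the input `|1⟩⟨1|` with a projective measurement in the standard basis attains them. -/

namespace Paper

theorem _root_.Matrix.PosSemidef.re_apply_self_nonneg {n : Type*} [Fintype n]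
    {A : Matrix n n ℂ} (hA : A.PosSemidef) (i : n) : 0 ≤ (A i i).re :=
  (Complex.le_def.mp hA.diag_nonneg).1

theorem _root_.Matrix.PosSemidef.apply_eq_zero_of_apply_self_eq_zero {n : Type*} [Fintype n]
    [DecidableEq n] {A : Matrix n n ℂ} (hA : A.PosSemidef) {i : n} (h : A i i = 0) (k : n) : A k i = 0 := by
  have hAi := (hA.dotProduct_mulVec_zero_iff (Pi.single i 1)).mp
    (by simpa [mulVec, dotProduct, Pi.single_apply] using h)
  simpa [mulVec, dotProduct, Pi.single_apply] using congrFun hAi k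

lemma mul_add_mul_le_of_mul_eq_zero {m n p q : ℝ} (hmn : m + n ≤ 1) (hp : 0 ≤ p) (hq : 0 ≤ q)
    (hmq : m * q = 0) (hnp : n * p = 0) :
    m * p + n * q ≤ if p = 0 then q else if q = 0 then p else 0 := by
  split_ifs with hp0 hq0
  · subst hp0; nlinarith
  · subst hq0; nlinarith
  · have hm0 : m = 0 := (mul_eq_zero.mp hmq).resolve_right hq0
    have hn0 : n = 0 := (mul_eq_zero.mp hnp).resolve_right hp0
    simp [hm0, hn0]

section General

variable {n : Type*} [Fintype n] [DecidableEq n]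

def IsUnambiguousPOVM (U σ M₁ M₂ M₃ : Matrix n n ℂ) : Prop :=
  M₁.PosSemidef ∧ M₂.PosSemidef ∧ M₃.PosSemidef ∧ M₁ + M₂ + M₃ = 1 ∧
    (M₂ * measChannel (1 : Matrix n n ℂ) σ).trace = 0 ∧ (M₁ * measChannel U σ).trace = 0

def successProb (U σ M₁ M₂ : Matrix n n ℂ) : ℝ :=
  (1 / 2) * (((M₁ * measChannel (1 : Matrix n n ℂ) σ).trace).re +
    ((M₂ * measChannel U σ).trace).re)

lemma puNoEnt_eq (U : Matrix n n ℂ) :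
    puNoEnt U = sSup { t | ∃ σ M₁ M₂ M₃, IsDensityMatrix σ ∧
      IsUnambiguousPOVM U σ M₁ M₂ M₃ ∧ t = successProb U σ M₁ M₂ } := by
  simp only [puNoEnt, IsUnambiguousPOVM, successProb, and_assoc]

lemma puNoEnt_eq_of_isGreatest {U σ M₁ M₂ M₃ : Matrix n n ℂ} (hσ : IsDensityMatrix σ)
    (hM : IsUnambiguousPOVM U σ M₁ M₂ M₃)
    (hle : ∀ σ' M₁' M₂' M₃', IsDensityMatrix σ' → IsUnambiguousPOVM U σ' M₁' M₂' M₃' →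
      successProb U σ' M₁' M₂' ≤ successProb U σ M₁ M₂) :
    puNoEnt U = successProb U σ M₁ M₂ := by
  rw [puNoEnt_eq]
  refine IsGreatest.csSup_eq ⟨⟨σ, M₁, M₂, M₃, hσ, hM, rfl⟩, ?_⟩
  rintro _ ⟨σ', M₁', M₂', M₃', hσ', hM', rfl⟩
  exact hle σ' M₁' M₂' M₃' hσ' hM'

lemma measChannel_apply (U σ : Matrix n n ℂ) :
    measChannel U σ = diagonal fun i => (Uᴴ * σ * U) i i := by
  simp [measChannel, dephaseMap, unitaryChannel]

lemma conjTranspose_mul_single_mul_apply_self (U : Matrix n n ℂ) (k i : n) :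
    (Uᴴ * single k k (1 : ℂ) * U) i i = (‖U k i‖ ^ 2 : ℝ) := by
  simp [mul_apply, single_apply, ite_and, Complex.conj_mul']

lemma measChannel_single (U : Matrix n n ℂ) (k : n) :
    measChannel U (single k k 1) = diagonal fun i => ((‖U k i‖ ^ 2 : ℝ) : ℂ) := by
  simp only [measChannel_apply, conjTranspose_mul_single_mul_apply_self]

lemma isDensityMatrix_single (k : n) : IsDensityMatrix (single k k (1 : ℂ)) :=
  ⟨by simpa using posSemidef_conjTranspose_mul_self (single k k (1 : ℂ)), by simp⟩

lemma IsDensityMatrix.conjTranspose_mul_mul {σ U : Matrix n n ℂ} (hσ : IsDensityMatrix σ)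
    (hU : U ∈ unitaryGroup n ℂ) : IsDensityMatrix (Uᴴ * σ * U) := by
  refine ⟨hσ.1.conjTranspose_mul_mul_same U, ?_⟩
  rw [trace_mul_cycle, ← star_eq_conjTranspose, hU.2, one_mul, hσ.2]

lemma sum_norm_sq_row {U : Matrix n n ℂ} (hU : U ∈ unitaryGroup n ℂ) (i : n) :
    ∑ k, ‖U i k‖ ^ 2 = 1 := by
  have h := congrFun (congrFun hU.2 i) i
  simp only [star_eq_conjTranspose, mul_apply, conjTranspose_apply, one_apply_eq,
    Complex.star_def, Complex.mul_conj'] at h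
  exact_mod_cast h

lemma sum_norm_sq_col {U : Matrix n n ℂ} (hU : U ∈ unitaryGroup n ℂ) (j : n) :
    ∑ k, ‖U k j‖ ^ 2 = 1 := by
  have h := congrFun (congrFun hU.1 j) j
  simp only [star_eq_conjTranspose, mul_apply, conjTranspose_apply, one_apply_eq,
    Complex.star_def, Complex.conj_mul'] at h
  exact_mod_cast h

lemma re_trace_mul_measChannel {M σ : Matrix n n ℂ} (hM : M.IsHermitian) (hσ : σ.IsHermitian)
    (U : Matrix n n ℂ) :
    (M * measChannel U σ).trace.re = ∑ i, (M i i).re * ((Uᴴ * σ * U) i i).re := by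
  have him : ∀ {A : Matrix n n ℂ}, A.IsHermitian → ∀ i, (A i i).im = 0 := fun hA i => by
    rw [← hA.coe_re_apply_self i]; simp
  simp [measChannel_apply, trace, mul_diagonal, Complex.re_sum, Complex.mul_re,
    him hM, him (isHermitian_conjTranspose_mul_mul U hσ)]

lemma re_mul_re_eq_zero_of_trace_mul_measChannel_eq_zero {M σ : Matrix n n ℂ}
    (hM : M.PosSemidef) (hσ : σ.PosSemidef) (U : Matrix n n ℂ)
    (h : (M * measChannel U σ).trace = 0) (i : n) :
    (M i i).re * ((Uᴴ * σ * U) i i).re = 0 := by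
  have hsum := re_trace_mul_measChannel hM.1 hσ.1 U
  rw [h, Complex.zero_re, eq_comm, Finset.sum_eq_zero_iff_of_nonneg] at hsum
  · exact hsum i (Finset.mem_univ i)
  · exact fun j _ => mul_nonneg (hM.re_apply_self_nonneg j)
      ((hσ.conjTranspose_mul_mul_same U).re_apply_self_nonneg j)

lemma IsUnambiguousPOVM.re_add_re_le_one {U σ M₁ M₂ M₃ : Matrix n n ℂ}
    (h : IsUnambiguousPOVM U σ M₁ M₂ M₃) (i : n) : (M₁ i i).re + (M₂ i i).re ≤ 1 := by
  have hi := congrArg (fun M => (M i i).re) h.2.2.2.1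
  simp only [Matrix.add_apply, one_apply_eq, Complex.add_re, Complex.one_re] at hi
  linarith [h.2.2.1.re_apply_self_nonneg i]

def unambiguityBound (U σ : Matrix n n ℂ) (i : n) : ℝ :=
  if (σ i i).re = 0 then ((Uᴴ * σ * U) i i).re
  else if ((Uᴴ * σ * U) i i).re = 0 then (σ i i).re else 0

theorem two_mul_successProb_le {U σ M₁ M₂ M₃ : Matrix n n ℂ} (hσ : σ.PosSemidef)
    (h : IsUnambiguousPOVM U σ M₁ M₂ M₃) :
    2 * successProb U σ M₁ M₂ ≤ ∑ i, unambiguityBound U σ i := by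
  have hle := h.re_add_re_le_one
  obtain ⟨hM₁, hM₂, -, -, hamb₂, hamb₁⟩ := h
  have hamb₂' := re_mul_re_eq_zero_of_trace_mul_measChannel_eq_zero hM₂ hσ 1 hamb₂
  simp only [conjTranspose_one, one_mul, mul_one] at hamb₂'
  rw [successProb, re_trace_mul_measChannel hM₁.1 hσ.1, re_trace_mul_measChannel hM₂.1 hσ.1,
    ← mul_assoc, show 2 * (1 / 2 : ℝ) = 1 by norm_num, one_mul, ← Finset.sum_add_distrib]
  simp only [conjTranspose_one, one_mul, mul_one]
  exact Finset.sum_le_sum fun i _ => mul_add_mul_le_of_mul_eq_zero (hle i)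
    (hσ.re_apply_self_nonneg i) ((hσ.conjTranspose_mul_mul_same U).re_apply_self_nonneg i)
    (re_mul_re_eq_zero_of_trace_mul_measChannel_eq_zero hM₁ hσ U hamb₁ i) (hamb₂' i)

end General

section Qubit

variable {U σ : Matrix (Fin 2) (Fin 2) ℂ}

lemma norm_sq_add_norm_sq (hU : U ∈ unitaryGroup (Fin 2) ℂ) : ‖U 0 0‖ ^ 2 + ‖U 0 1‖ ^ 2 = 1 := by
  simpa [Fin.sum_univ_two] using sum_norm_sq_row hU 0

lemma norm_apply_of_ne (hU : U ∈ unitaryGroup (Fin 2) ℂ) {i j : Fin 2} (hij : i ≠ j) :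
    ‖U i j‖ = ‖U 0 1‖ := by
  have hrow := sum_norm_sq_row hU 0
  have hcol := sum_norm_sq_col hU 0
  simp only [Fin.sum_univ_two] at hrow hcol
  fin_cases i <;> fin_cases j <;> simp at hij ⊢
  exact (pow_left_inj₀ (norm_nonneg _) (norm_nonneg _) two_ne_zero).mp (by linarith)

lemma IsDensityMatrix.eq_single_of_apply_eq_zero (hσ : IsDensityMatrix σ) {i j : Fin 2}
    (hij : i ≠ j) (h : σ i i = 0) : σ = single j j 1 := by
  have hcol := hσ.1.apply_eq_zero_of_apply_self_eq_zero h
  have hrow : ∀ k, σ i k = 0 := fun k => by rw [← hσ.1.1.apply, hcol, star_zero]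
  have htr := hσ.2
  rw [trace, Fin.sum_univ_two] at htr
  ext a b
  fin_cases i <;> fin_cases j <;> fin_cases a <;> fin_cases b <;> simp_all

lemma IsDensityMatrix.re_conj_apply_self_of_re_apply_self_eq_zero
    (hU : U ∈ unitaryGroup (Fin 2) ℂ) (hσ : IsDensityMatrix σ) {i : Fin 2}
    (h : (σ i i).re = 0) : ((Uᴴ * σ * U) i i).re = ‖U 0 1‖ ^ 2 := by
  have h0 : σ i i = 0 := by rw [← hσ.1.1.coe_re_apply_self i]; simpa using h
  obtain ⟨j, hji⟩ := exists_ne i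
  rw [hσ.eq_single_of_apply_eq_zero hji.symm h0, conjTranspose_mul_single_mul_apply_self,
    Complex.ofReal_re, norm_apply_of_ne hU hji]

lemma IsDensityMatrix.re_apply_self_of_re_conj_apply_self_eq_zero
    (hU : U ∈ unitaryGroup (Fin 2) ℂ) (hσ : IsDensityMatrix σ) {i : Fin 2}
    (h : ((Uᴴ * σ * U) i i).re = 0) : (σ i i).re = ‖U 0 1‖ ^ 2 := by
  have hU_star : Uᴴ ∈ unitaryGroup (Fin 2) ℂ := Unitary.star_mem hU
  have hσ_eq : Uᴴᴴ * (Uᴴ * σ * U) * Uᴴ = σ := by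
    have hUU : U * Uᴴ = 1 := hU.2
    rw [conjTranspose_conjTranspose, ← Matrix.mul_assoc, ← Matrix.mul_assoc, hUU, one_mul,
      Matrix.mul_assoc, hUU, mul_one]
  have := (hσ.conjTranspose_mul_mul hU).re_conj_apply_self_of_re_apply_self_eq_zero hU_star h
  rwa [hσ_eq, conjTranspose_apply, norm_star, norm_apply_of_ne hU (by decide)] at this

lemma unambiguityBound_le (hU : U ∈ unitaryGroup (Fin 2) ℂ) (hσ : IsDensityMatrix σ)
    (i : Fin 2) : unambiguityBound U σ i ≤ ‖U 0 1‖ ^ 2 := by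
  unfold unambiguityBound
  split_ifs with hp hq
  · exact (hσ.re_conj_apply_self_of_re_apply_self_eq_zero hU hp).le
  · exact (hσ.re_apply_self_of_re_conj_apply_self_eq_zero hU hq).le
  · positivity

lemma exists_unambiguityBound_eq_zero (hU : U ∈ unitaryGroup (Fin 2) ℂ)
    (hσ : IsDensityMatrix σ) (hs : ‖U 0 1‖ ^ 2 < 1) : ∃ i, unambiguityBound U σ i = 0 := by
  by_contra! hne
  have hzero : ∀ i, (σ i i).re = 0 ∨ ((Uᴴ * σ * U) i i).re = 0 := fun i => by
    by_contra! hi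
    exact hne i (by simp [unambiguityBound, hi.1, hi.2])
  have hp := congrArg Complex.re hσ.2
  have hq := congrArg Complex.re (hσ.conjTranspose_mul_mul hU).2
  simp only [trace, Fin.sum_univ_two, diag_apply, Complex.add_re, Complex.one_re] at hp hq
  rcases hzero 0 with h0 | h0 <;> rcases hzero 1 with h1 | h1
  · linarith
  · linarith [hσ.re_apply_self_of_re_conj_apply_self_eq_zero hU h1]
  · linarith [hσ.re_apply_self_of_re_conj_apply_self_eq_zero hU h0]
  · linarith

theorem successProb_le_norm_sq {M₁ M₂ M₃ : Matrix (Fin 2) (Fin 2) ℂ}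
    (hU : U ∈ unitaryGroup (Fin 2) ℂ) (hσ : IsDensityMatrix σ)
    (h : IsUnambiguousPOVM U σ M₁ M₂ M₃) : successProb U σ M₁ M₂ ≤ ‖U 0 1‖ ^ 2 := by
  have := two_mul_successProb_le hσ.1 h
  rw [Fin.sum_univ_two] at this
  linarith [unambiguityBound_le hU hσ 0, unambiguityBound_le hU hσ 1]

theorem successProb_le_half_norm_sq {M₁ M₂ M₃ : Matrix (Fin 2) (Fin 2) ℂ}
    (hU : U ∈ unitaryGroup (Fin 2) ℂ) (hσ : IsDensityMatrix σ)
    (h : IsUnambiguousPOVM U σ M₁ M₂ M₃) (hs : ‖U 0 1‖ ^ 2 < 1) :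
    successProb U σ M₁ M₂ ≤ ‖U 0 1‖ ^ 2 / 2 := by
  have := two_mul_successProb_le hσ.1 h
  rw [Fin.sum_univ_two] at this
  rcases Fin.exists_fin_two.mp (exists_unambiguityBound_eq_zero hU hσ hs) with hi | hi <;>
    linarith [unambiguityBound_le hU hσ 0, unambiguityBound_le hU hσ 1]

variable (U)

lemma isUnambiguousPOVM_zero_single_single :
    IsUnambiguousPOVM U (single 0 0 1) 0 (single 1 1 1) (single 0 0 1) := by
  refine ⟨.zero, (isDensityMatrix_single 1).1, (isDensityMatrix_single 0).1, ?_, ?_, ?_⟩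
  · ext i j; fin_cases i <;> fin_cases j <;> simp
  · simp [measChannel_single, trace_single_mul]
  · simp

lemma successProb_zero_single :
    successProb U (single 0 0 1) 0 (single 1 1 1) = ‖U 0 1‖ ^ 2 / 2 := by
  simp [successProb, measChannel_single, trace_single_mul, -Complex.ofReal_pow]
  ring

lemma isUnambiguousPOVM_single_single_zero (h : U 0 0 = 0) :
    IsUnambiguousPOVM U (single 0 0 1) (single 0 0 1) (single 1 1 1) 0 := by
  refine ⟨(isDensityMatrix_single 0).1, (isDensityMatrix_single 1).1, .zero, ?_, ?_, ?_⟩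
  · ext i j; fin_cases i <;> fin_cases j <;> simp
  · simp [measChannel_single, trace_single_mul]
  · simp [measChannel_single, trace_single_mul, h]

lemma successProb_single_single :
    successProb U (single 0 0 1) (single 0 0 1) (single 1 1 1) = (1 + ‖U 0 1‖ ^ 2) / 2 := by
  simp [successProb, measChannel_single, trace_single_mul, -Complex.ofReal_pow]
  ring

end Qubit

theorem stmt8 (U : Matrix (Fin 2) (Fin 2) ℂ) (hU : U ∈ Matrix.unitaryGroup (Fin 2) ℂ) :
    (‖U 0 1‖ ^ 2 = 1 → puNoEnt U = 1) ∧
    (‖U 0 1‖ ^ 2 < 1 → puNoEnt U = ‖U 0 1‖ ^ 2 / 2) ∧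
    (∃ M₁ M₂ M₃ : Matrix (Fin 2) (Fin 2) ℂ,
      M₁.PosSemidef ∧ M₂.PosSemidef ∧ M₃.PosSemidef ∧ M₁ + M₂ + M₃ = 1 ∧
      (M₂ * measChannel (1 : Matrix (Fin 2) (Fin 2) ℂ)
        (Matrix.single (0 : Fin 2) (0 : Fin 2) (1 : ℂ))).trace = 0 ∧
      (M₁ * measChannel U (Matrix.single (0 : Fin 2) (0 : Fin 2) (1 : ℂ))).trace = 0 ∧
      (1 / 2) * (((M₁ * measChannel (1 : Matrix (Fin 2) (Fin 2) ℂ)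
          (Matrix.single (0 : Fin 2) (0 : Fin 2) (1 : ℂ))).trace).re +
        ((M₂ * measChannel U (Matrix.single (0 : Fin 2) (0 : Fin 2) (1 : ℂ))).trace).re) =
        puNoEnt U) := by
  have hσ₀ := isDensityMatrix_single (0 : Fin 2)
  have hU₀₀ (hs : ‖U 0 1‖ ^ 2 = 1) : U 0 0 = 0 := by simpa [hs] using norm_sq_add_norm_sq hU
  have hpu_of_eq (hs : ‖U 0 1‖ ^ 2 = 1) :
      puNoEnt U = successProb U (single 0 0 1) (single 0 0 1) (single 1 1 1) :=
    puNoEnt_eq_of_isGreatest hσ₀ (isUnambiguousPOVM_single_single_zero U (hU₀₀ hs))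
      fun _ _ _ _ hσ h => by
        rw [successProb_single_single]; linarith [successProb_le_norm_sq hU hσ h]
  have hpu_of_lt (hs : ‖U 0 1‖ ^ 2 < 1) :
      puNoEnt U = successProb U (single 0 0 1) 0 (single 1 1 1) :=
    puNoEnt_eq_of_isGreatest hσ₀ (isUnambiguousPOVM_zero_single_single U) fun _ _ _ _ hσ h => by
      rw [successProb_zero_single]; exact successProb_le_half_norm_sq hU hσ h hs
  refine ⟨fun hs => ?_, fun hs => by rw [hpu_of_lt hs, successProb_zero_single], ?_⟩
  · rw [hpu_of_eq hs, successProb_single_single, hs]; norm_num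
  rcases (show ‖U 0 1‖ ^ 2 ≤ 1 by nlinarith [norm_sq_add_norm_sq hU]).eq_or_lt with hs | hs
  · obtain ⟨h₁, h₂, h₃, hsum, hamb₂, hamb₁⟩ := isUnambiguousPOVM_single_single_zero U (hU₀₀ hs)
    exact ⟨_, _, _, h₁, h₂, h₃, hsum, hamb₂, hamb₁, (hpu_of_eq hs).symm⟩
  · obtain ⟨h₁, h₂, h₃, hsum, hamb₂, hamb₁⟩ := isUnambiguousPOVM_zero_single_single U
    exact ⟨_, _, _, h₁, h₂, h₃, hsum, hamb₂, hamb₁, (hpu_of_lt hs).symm⟩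

end Paper
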